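/- The characteristic polynomial identity: for all σ ∈ [0, 1/√3] and α > 0, det(J(σ) - λI) = -λ³ - 2(1+s)λ² + (2-α+12σ² - (α+2)s)λ - 4αs(1+s), where s = √(1-3σ²) and J(σ) is the 3×3 matrix [[-1-s, -1, 3σ²√((1+s)/2)], [(α+2)(1+s), 2, -3(α+2)σ²√((1+s)/2)], [3√2/√(1+s), 0, -3-s]]. -/
import Mathlib

/-- The Jacobian at the equilibrium `s₁` of the Gaussian-approximation system with
`θ = α + 2`, as a function of `u = σ²` (with `s = √(1-3u)`). -/
noncomputable def jacS1 (α u : ℝ) : Matrix (Fin 3) (Fin 3) ℝ :=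
  !![-1 - Real.sqrt (1 - 3 * u), -1, 3 * u * Real.sqrt ((1 + Real.sqrt (1 - 3 * u)) / 2);
     (α + 2) * (1 + Real.sqrt (1 - 3 * u)), 2,
       -3 * (α + 2) * u * Real.sqrt ((1 + Real.sqrt (1 - 3 * u)) / 2);
     3 * Real.sqrt 2 / Real.sqrt (1 + Real.sqrt (1 - 3 * u)), 0,
       -3 - Real.sqrt (1 - 3 * u)]

/-- Characteristic polynomial identity: for `σ ∈ [0, 1/√3]` and `α > 0`, with
`s = √(1-3σ²)`,
`det(J(σ) - λI) = -λ³ - 2(1+s)λ² + (2-α+12σ² - (α+2)s)λ - 4αs(1+s)`. -/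
theorem char_poly_identity (α σ : ℝ) (hα : 0 < α) (hσ0 : 0 ≤ σ)
    (hσ : σ ≤ 1 / Real.sqrt 3) (s : ℝ) (hs : s = Real.sqrt (1 - 3 * σ ^ 2)) (l : ℂ) :
    Matrix.det ((jacS1 α (σ ^ 2)).map Complex.ofReal
        - l • (1 : Matrix (Fin 3) (Fin 3) ℂ)) =
      -l ^ 3 - 2 * (1 + (s : ℂ)) * l ^ 2
        + ((2 : ℂ) - (α : ℂ) + 12 * (σ : ℂ) ^ 2 - ((α : ℂ) + 2) * (s : ℂ)) * l
        - 4 * (α : ℂ) * (s : ℂ) * (1 + (s : ℂ)) := by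
  have hu : 0 ≤ 1 - 3 * σ ^ 2 := by
    have h1 : σ ^ 2 ≤ (1 / Real.sqrt 3) ^ 2 := pow_le_pow_left₀ hσ0 hσ 2
    have h2' : (Real.sqrt 3) ^ 2 = 3 := Real.sq_sqrt (by norm_num)
    have h3' : (1 / Real.sqrt 3) ^ 2 = 1 / 3 := by rw [div_pow, h2']; norm_num
    nlinarith
  have hs0 : 0 ≤ s := hs ▸ Real.sqrt_nonneg _
  have hss : s ^ 2 = 1 - 3 * σ ^ 2 := by rw [hs]; exact Real.sq_sqrt hu
  have h1s : (0:ℝ) < 1 + s := by linarith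
  have hApos : (0:ℝ) < Real.sqrt ((1 + s) / 2) := Real.sqrt_pos.mpr (by linarith)
  have hA : Real.sqrt ((1 + s) / 2) * Real.sqrt 2 = Real.sqrt (1 + s) := by
    rw [← Real.sqrt_mul (by linarith) 2]
    norm_num
  have h2 : 3 * Real.sqrt 2 / Real.sqrt (1 + s) = 3 / Real.sqrt ((1 + s) / 2) := by
    rw [← hA, div_eq_div_iff (by positivity) (by positivity)]
    ring
  have hσ2C : (σ : ℂ) ^ 2 = (1 - (s : ℂ) ^ 2) / 3 := by
    have h : (σ:ℝ) ^ 2 = (1 - s ^ 2) / 3 := by linarith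
    have h' := congrArg (fun x : ℝ => (x : ℂ)) h
    push_cast at h'
    exact h'
  simp only [jacS1, ← hs, h2]
  set A := Real.sqrt ((1 + s) / 2) with hAdef
  have hA0C : (A : ℂ) ≠ 0 := by exact_mod_cast hApos.ne'
  simp [Matrix.det_fin_three, Matrix.map_apply, Matrix.smul_apply]
  push_cast
  rw [hσ2C]
  field_simp
  ring
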